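/- arXiv:1311.4476 — 2 statements merged into one kernel-verified Lean document; each statement's English description precedes it below -/
import Mathlib

section
/- A finite simple graph G is v-critical if and only if for every vertex v ∈ V(G) there exists a minimal Roman partition (V_0; V_1; V_2) of G with v ∈ V_1. -/
open SimpleGraph

/-- A Roman domination function on `G`. -/
def IsRomanFn {V : Type*} (G : SimpleGraph V) (r : V → Fin 3) : Prop :=
  ∀ u, r u = 0 → ∃ v, G.Adj u v ∧ r v = 2

/-- The weight of a Roman domination function. -/
noncomputable def romanWeight {V : Type*} [Fintype V] (r : V → Fin 3) : ℕ :=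
  ∑ u, (r u : ℕ)

/-- The Roman domination number of `G`. -/
noncomputable def romanNumber {V : Type*} [Fintype V] (G : SimpleGraph V) : ℕ :=
  sInf {w | ∃ r : V → Fin 3, IsRomanFn G r ∧ romanWeight r = w}

/-- `G` is vertex critical. -/
def VCritical {V : Type*} [Fintype V] [DecidableEq V] (G : SimpleGraph V) : Prop :=
  ∀ v : V, romanNumber (G.induce {u | u ≠ v}) = romanNumber G - 1

/-- `G` is edge critical. -/
def ECritical {V : Type*} [Fintype V] [DecidableEq V] (G : SimpleGraph V) : Prop :=
  VCritical G ∧ ∀ e ∈ G.edgeSet, ¬ VCritical (G.deleteEdges {e})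

/-- `G` is Roman saturated. -/
def RomanSaturated {V : Type*} [Fintype V] (G : SimpleGraph V) : Prop :=
  ∀ v w : V, v ≠ w → ¬ G.Adj v w →
    romanNumber (G ⊔ SimpleGraph.fromEdgeSet {s(v, w)}) = romanNumber G - 1

/-- `v` is a cut vertex of `G`. -/
def IsCutVertex {V : Type*} [Fintype V] [DecidableEq V] (G : SimpleGraph V) (v : V) : Prop :=
  Nat.card G.ConnectedComponent < Nat.card (G.induce {u | u ≠ v}).ConnectedComponent

/-! Deleting a vertex `v` and giving it the value `1` turns Roman domination functions of
`G - v` into Roman domination functions of `G` of one more weight, and conversely every Roman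
domination function of `G` with value `1` at `v` restricts to one of `G - v` of one less weight
(a vertex of value `1` dominates nobody). Hence `γ_R(G) ≤ γ_R(G - v) + 1`, with equality exactly
when some minimal Roman domination function of `G` takes the value `1` at `v`. -/

section

variable {V : Type*} {G : SimpleGraph V}

lemma exists_isRomanFn_romanWeight_eq_romanNumber [Fintype V] (G : SimpleGraph V) :
    ∃ r : V → Fin 3, IsRomanFn G r ∧ romanWeight r = romanNumber G :=
  Nat.sInf_mem (s := {w | ∃ r : V → Fin 3, IsRomanFn G r ∧ romanWeight r = w})
    ⟨_, fun _ => 1, fun _ h => absurd h one_ne_zero, rfl⟩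

lemma romanNumber_le_romanWeight [Fintype V] {r : V → Fin 3} (hr : IsRomanFn G r) :
    romanNumber G ≤ romanWeight r :=
  Nat.sInf_le ⟨r, hr, rfl⟩

lemma IsRomanFn.one_le_romanWeight [Fintype V] {r : V → Fin 3} (hr : IsRomanFn G r) (v : V) :
    1 ≤ romanWeight r := by
  have single_le (w : V) : (r w : ℕ) ≤ romanWeight r :=
    Finset.single_le_sum (f := fun u => (r u : ℕ)) (fun _ _ => Nat.zero_le _)
      (Finset.mem_univ w)
  by_cases hv : r v = 0
  · obtain ⟨w, -, hw⟩ := hr v hv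
    exact (show 1 ≤ ((2 : Fin 3) : ℕ) by decide).trans (hw ▸ single_le w)
  · have hv' : (r v : ℕ) ≠ 0 := fun h => hv (Fin.ext h)
    exact (Nat.one_le_iff_ne_zero.2 hv').trans (single_le v)

lemma one_le_romanNumber [Fintype V] (G : SimpleGraph V) (v : V) : 1 ≤ romanNumber G := by
  obtain ⟨r, hr, hw⟩ := exists_isRomanFn_romanWeight_eq_romanNumber G
  exact hw ▸ hr.one_le_romanWeight v

lemma IsRomanFn.restrict {r : V → Fin 3} {v : V} (hr : IsRomanFn G r) (hv : r v = 1) :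
    IsRomanFn (G.induce {u | u ≠ v}) (fun u => r u) := by
  intro u hu
  obtain ⟨w, hadj, hw⟩ := hr u hu
  have hwv : w ≠ v := by rintro rfl; simp [hv] at hw
  exact ⟨⟨w, hwv⟩, hadj, hw⟩

section DeleteVertex

variable [DecidableEq V] {v : V}

def extendByOne (r : {u | u ≠ v} → Fin 3) (u : V) : Fin 3 :=
  if hu : u = v then 1 else r ⟨u, hu⟩

@[simp]
lemma extendByOne_self (r : {u | u ≠ v} → Fin 3) : extendByOne r v = 1 := dif_pos rfl

@[simp]
lemma extendByOne_val (r : {u | u ≠ v} → Fin 3) (u : {u | u ≠ v}) :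
    extendByOne r u = r u := dif_neg u.2

lemma IsRomanFn.extendByOne {r : {u | u ≠ v} → Fin 3}
    (hr : IsRomanFn (G.induce {u | u ≠ v}) r) : IsRomanFn G (extendByOne r) := by
  intro u hu
  by_cases huv : u = v
  · simp [huv] at hu
  · obtain ⟨w, hadj, hw⟩ := hr ⟨u, huv⟩ (by simpa [_root_.extendByOne, huv] using hu)
    exact ⟨w, hadj, by simpa using hw⟩

variable [Fintype V]

lemma romanWeight_eq_add_romanWeight_restrict (r : V → Fin 3) (v : V) :
    romanWeight r = r v + romanWeight (fun u : {u | u ≠ v} => r u) :=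
  Fintype.sum_eq_add_sum_subtype_ne _ v

lemma romanWeight_extendByOne (r : {u | u ≠ v} → Fin 3) :
    romanWeight (extendByOne r) = romanWeight r + 1 := by
  simp [romanWeight_eq_add_romanWeight_restrict _ v, add_comm]

lemma romanNumber_le_romanNumber_induce_ne_add_one (G : SimpleGraph V) (v : V) :
    romanNumber G ≤ romanNumber (G.induce {u | u ≠ v}) + 1 := by
  obtain ⟨r, hr, hw⟩ := exists_isRomanFn_romanWeight_eq_romanNumber (G.induce {u | u ≠ v})
  simpa [romanWeight_extendByOne, hw] using romanNumber_le_romanWeight hr.extendByOne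

lemma romanNumber_induce_ne_eq_sub_one_iff (G : SimpleGraph V) (v : V) :
    romanNumber (G.induce {u | u ≠ v}) = romanNumber G - 1 ↔
      ∃ r : V → Fin 3, IsRomanFn G r ∧ romanWeight r = romanNumber G ∧ r v = 1 := by
  have hpos := one_le_romanNumber G v
  have hle := romanNumber_le_romanNumber_induce_ne_add_one G v
  constructor
  · intro hdel
    obtain ⟨r, hr, hw⟩ := exists_isRomanFn_romanWeight_eq_romanNumber (G.induce {u | u ≠ v})
    refine ⟨extendByOne r, hr.extendByOne, ?_, extendByOne_self r⟩
    rw [romanWeight_extendByOne, hw, hdel]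
    omega
  · rintro ⟨r, hr, hw, hv⟩
    have hres := romanNumber_le_romanWeight (hr.restrict hv)
    have hsplit := romanWeight_eq_add_romanWeight_restrict r v
    rw [hv] at hsplit
    simp only [Fin.val_one] at hsplit
    omega

end DeleteVertex

end

/-- `G` is v-critical iff every vertex lies in `V_1` of some minimal Roman
partition (equivalently, some minimal Roman domination function takes value 1 at it). -/
theorem vCritical_iff_forall_exists_minimal_roman_one {V : Type*} [Fintype V] [DecidableEq V]
    (G : SimpleGraph V) :
    VCritical G ↔ ∀ v : V, ∃ r : V → Fin 3,
      IsRomanFn G r ∧ romanWeight r = romanNumber G ∧ r v = 1 :=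
  forall_congr' (romanNumber_induce_ne_eq_sub_one_iff G)
end

section
/- Let G be a nonelementary v-critical finite simple graph with γ_R(G) = 4, let x ∈ V(G), and let a_x, b_x be vertices with a_x ≠ x ≠ b_x and N[a_x] = V(G) \ {x, b_x}. Then either N[x] = V(G) \ {a_x, y} for some vertex y ∈ V(G), or N[b_x] = V(G) \ {a_x, y} for some vertex y ∈ V(G). -/
open SimpleGraph

/-! A minimum Roman function of `G - a` has weight `3`, so it puts `2` on one vertex `u`, `1` on
at most one other vertex `w`, and `0` elsewhere; hence `u` dominates every vertex except `a` and
`w`. Were `u` adjacent to `a` or to `w`, the same pattern would give `γ_R(G) ≤ 3`. Thus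
`N[u] = V(G) \ {a, w}`, and as `a ∉ N[u]`, `u ∉ N[a] = V(G) \ {x, b}`, i.e. `u ∈ {x, b}`. -/

section Roman

variable {V : Type*} [Fintype V]

lemma IsRomanFn.romanNumber_le {G : SimpleGraph V} {r : V → Fin 3} (hr : IsRomanFn G r) :
    romanNumber G ≤ romanWeight r :=
  Nat.sInf_le ⟨r, hr, rfl⟩

lemma exists_romanWeight_eq_romanNumber (G : SimpleGraph V) :
    ∃ r : V → Fin 3, IsRomanFn G r ∧ romanWeight r = romanNumber G := by
  have hconst : IsRomanFn G fun _ => 2 := fun _ h => by simp at h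
  exact Nat.sInf_mem (s := {w | ∃ r : V → Fin 3, IsRomanFn G r ∧ romanWeight r = w})
    ⟨_, _, hconst, rfl⟩

lemma IsRomanFn.card_le_romanWeight {G : SimpleGraph V} {r : V → Fin 3} (hr : IsRomanFn G r)
    (hno2 : ∀ v, r v ≠ 2) : Fintype.card V ≤ romanWeight r := by
  rw [Fintype.card_eq_sum_ones, romanWeight]
  refine Finset.sum_le_sum fun v _ => Nat.one_le_iff_ne_zero.mpr fun h0 => ?_
  obtain ⟨z, -, hz⟩ := hr v (Fin.ext h0)
  exact hno2 z hz

lemma val_add_val_le_romanWeight [DecidableEq V] (r : V → Fin 3) {u v : V} (huv : u ≠ v) :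
    (r u : ℕ) + r v ≤ romanWeight r := by
  calc (r u : ℕ) + r v = ∑ z ∈ {u, v}, (r z : ℕ) := by rw [Finset.sum_pair huv]
    _ ≤ romanWeight r := Finset.sum_le_sum_of_subset (Finset.subset_univ _)

lemma val_add_val_add_val_le_romanWeight [DecidableEq V] (r : V → Fin 3) {u w v : V}
    (huw : u ≠ w) (huv : u ≠ v) (hwv : w ≠ v) : (r u : ℕ) + r w + r v ≤ romanWeight r := by
  calc (r u : ℕ) + r w + r v = ∑ z ∈ {u, w, v}, (r z : ℕ) := by
        rw [Finset.sum_insert (by simp [huw, huv]), Finset.sum_pair hwv, add_assoc]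
    _ ≤ romanWeight r := Finset.sum_le_sum_of_subset (Finset.subset_univ _)

lemma romanNumber_le_three_of_forall_adj [DecidableEq V] (G : SimpleGraph V) {u t : V}
    (htu : t ≠ u) (hadj : ∀ v, v ≠ u → v ≠ t → G.Adj u v) : romanNumber G ≤ 3 := by
  set r : V → Fin 3 := fun v => if v = u then 2 else if v = t then 1 else 0
  have hr : IsRomanFn G r := by
    intro v hv
    have hvu : v ≠ u := by rintro rfl; simp [r] at hv
    have hvt : v ≠ t := by rintro rfl; simp [r, htu] at hv
    exact ⟨u, (hadj v hvu hvt).symm, by simp [r]⟩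
  have hweight : romanWeight r = 3 := by
    rw [romanWeight, ← Finset.sum_subset (Finset.subset_univ {u, t}), Finset.sum_pair htu.symm]
    · simp [r, htu]
    · intro v _ hv
      simp only [Finset.mem_insert, Finset.mem_singleton, not_or] at hv
      simp [r, hv.1, hv.2]
  exact hweight ▸ hr.romanNumber_le

lemma exists_forall_adj_of_romanNumber_le_three (G : SimpleGraph V) (h3 : romanNumber G ≤ 3)
    (hcard : 3 < Fintype.card V) : ∃ u w, w ≠ u ∧ ∀ v, v ≠ u → v ≠ w → G.Adj u v := by
  classical
  obtain ⟨r, hr, hweight⟩ := exists_romanWeight_eq_romanNumber G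
  obtain ⟨u, hu⟩ : ∃ u, r u = 2 := by
    by_contra! hno2
    have := hr.card_le_romanWeight hno2
    omega
  have hu' : (r u : ℕ) = 2 := by simp [hu]
  -- `w` carries the remaining weight, if any is left
  obtain ⟨w, hwu, hzero⟩ : ∃ w, w ≠ u ∧ ∀ v, v ≠ u → v ≠ w → r v = 0 := by
    by_cases hw : ∃ w, w ≠ u ∧ r w ≠ 0
    · obtain ⟨w, hwu, hw0⟩ := hw
      refine ⟨w, hwu, fun v hvu hvw => Fin.ext ?_⟩
      have := val_add_val_add_val_le_romanWeight r hwu.symm (Ne.symm hvu) (Ne.symm hvw)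
      have := Fin.val_ne_iff.mpr hw0
      simp only [Fin.val_zero] at this ⊢
      omega
    · push Not at hw
      obtain ⟨w, hwu⟩ := Fintype.exists_ne_of_one_lt_card (by omega) u
      exact ⟨w, hwu, fun v hvu _ => hw v hvu⟩
  have hunique : ∀ z, r z = 2 → z = u := by
    intro z hz
    by_contra hzu
    have := val_add_val_le_romanWeight r hzu
    rw [hu', show (r z : ℕ) = 2 by simp [hz]] at this
    omega
  refine ⟨u, w, hwu, fun v hvu hvw => ?_⟩
  obtain ⟨z, hvz, hz⟩ := hr v (hzero v hvu hvw)
  exact hunique z hz ▸ hvz.symm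

lemma exists_closedNbhd_eq_univ_diff_pair [DecidableEq V] (G : SimpleGraph V) (a : V)
    (hGa : romanNumber (G.induce {v | v ≠ a}) ≤ 3) (hG : 3 < romanNumber G)
    (hcard : 4 < Fintype.card V) :
    ∃ u w, insert u (G.neighborSet u) = Set.univ \ {a, w} := by
  obtain ⟨⟨u, hua⟩, ⟨w, hwa⟩, hwu, hadj⟩ :=
    exists_forall_adj_of_romanNumber_le_three _ hGa (by rw [Set.card_ne_eq]; omega)
  have hwu : w ≠ u := fun h => hwu (Subtype.ext h)
  have hadjG : ∀ v, v ≠ a → v ≠ u → v ≠ w → G.Adj u v := fun v hva hvu hvw =>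
    hadj ⟨v, hva⟩ (fun h => hvu congr($h.1)) (fun h => hvw congr($h.1))
  have hna : ¬ G.Adj u a := fun hua' => hG.not_ge <|
    romanNumber_le_three_of_forall_adj G hwu fun v hvu hvw => by
      by_cases hva : v = a
      · exact hva ▸ hua'
      · exact hadjG v hva hvu hvw
  have hnw : ¬ G.Adj u w := fun huw' => hG.not_ge <|
    romanNumber_le_three_of_forall_adj G (Ne.symm hua) fun v hvu hva => by
      by_cases hvw : v = w
      · exact hvw ▸ huw'
      · exact hadjG v hva hvu hvw
  refine ⟨u, w, Set.ext fun v => ?_⟩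
  by_cases hvu : v = u
  · subst hvu; simpa [hwu.symm] using hua
  · simp only [Set.mem_insert_iff, hvu, false_or, mem_neighborSet, Set.mem_sdiff,
      Set.mem_univ, true_and, not_or]
    exact ⟨fun h => ⟨by rintro rfl; exact hna h, by rintro rfl; exact hnw h⟩,
      fun h => hadjG v h.1 hvu h.2⟩

end Roman

theorem closed_nbhd_of_vCritical_general {V : Type*} [Fintype V] [DecidableEq V]
    (G : SimpleGraph V) (hne : romanNumber G < Fintype.card V) (hv : VCritical G)
    (h4 : romanNumber G = 4) (x a b : V)
    (hN : insert a (G.neighborSet a) = Set.univ \ {x, b}) :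
    (∃ y : V, insert x (G.neighborSet x) = Set.univ \ {a, y}) ∨
    (∃ y : V, insert b (G.neighborSet b) = Set.univ \ {a, y}) := by
  obtain ⟨u, w, hNu⟩ :=
    exists_closedNbhd_eq_univ_diff_pair G a (by rw [hv a, h4]) (by omega) (by omega)
  have hu : u ∉ insert a (G.neighborSet a) := by
    rintro (rfl | hau)
    · simpa using hNu.subset (Set.mem_insert u _)
    · simpa using hNu.subset (Or.inr hau.symm : a ∈ insert u (G.neighborSet u))
  rw [hN] at hu
  simp only [Set.mem_sdiff, Set.mem_univ, true_and, Set.mem_insert_iff, Set.mem_singleton_iff,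
    not_not] at hu
  rcases hu with rfl | rfl
  · exact Or.inl ⟨w, hNu⟩
  · exact Or.inr ⟨w, hNu⟩

/-- in a nonelementary v-critical graph with γ_R(G) = 4, given `x, a_x, b_x`
with `N[a_x] = V(G) \ {x, b_x}`, either `N[x] = V(G) \ {a_x, y}` or
`N[b_x] = V(G) \ {a_x, y}` for some vertex `y`. -/
theorem closed_nbhd_of_vCritical {V : Type*} [Fintype V] [DecidableEq V]
    (G : SimpleGraph V) (hne : romanNumber G < Fintype.card V) (hv : VCritical G)
    (h4 : romanNumber G = 4) (x a b : V) (ha : a ≠ x) (hb : x ≠ b)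
    (hN : insert a (G.neighborSet a) = Set.univ \ {x, b}) :
    (∃ y : V, insert x (G.neighborSet x) = Set.univ \ {a, y}) ∨
    (∃ y : V, insert b (G.neighborSet b) = Set.univ \ {a, y}) :=
  closed_nbhd_of_vCritical_general G hne hv h4 x a b hN
end
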